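/- Define u_n^n = P(γ_{S_{n-1}+1} = i_n and A_j = i_n for S_{n-1}+1 ≤ j ≤ S_n) in the coupled construction, where the n-th block has length M_n = S_n - S_{n-1} and i_n ∈ {-1,1}. Then u_n^n = (1 + M_n)/(2·3^{M_n}) and v_n^n := P(γ_{S_{n-1}+1} = -i_n and A_j = i_n on the block) = 1/(2·3^{M_n}), hence x_n^n := v_n^n/u_n^n = 1/(M_n + 1). -/
import Mathlib


open MeasureTheory ProbabilityTheory Finset

noncomputable section

/-- The sample space of the coupled construction: `ε`, `(α_k)`, `(β_k)`. -/
abbrev Omega (K : ℕ) := Bool × (Fin K → Fin 3) × (Fin K → Bool)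

/-- The uniform probability measure on `Omega K`; its coordinates are independent,
`ε` is uniform on `{-1,1}` (via `Bool`), each `α_k` is Bernoulli(1/3)
(`α_k = 1` iff the `Fin 3` coordinate equals `0`), each `β_k` uniform on `{-1,1}`. -/
def unif (K : ℕ) : Measure (Omega K) := (PMF.uniformOfFintype (Omega K)).toMeasure

def sgn (b : Bool) : ℤ := if b then 1 else -1

def epsRV {K : ℕ} (ω : Omega K) : ℤ := sgn ω.1

def alphaRV {K : ℕ} (k : Fin K) (ω : Omega K) : ℤ := if ω.2.1 k = 0 then 1 else 0

def alphaN {K : ℕ} (k : Fin K) (ω : Omega K) : ℕ := if ω.2.1 k = 0 then 1 else 0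

def betaRV {K : ℕ} (k : Fin K) (ω : Omega K) : ℤ := sgn (ω.2.2 k)

/-- `γ_{j+1} = ε · (-1)^{α_1 + ⋯ + α_j}` (0-indexed: `gammaRV j` is the paper's `γ_{j+1}`). -/
def gammaRV {K : ℕ} (j : ℕ) (ω : Omega K) : ℤ :=
  epsRV ω * (-1) ^ (∑ k ∈ Finset.univ.filter (fun k : Fin K => (k : ℕ) < j), alphaN k ω)

/-- `A_k = (1-α_k)β_k + α_k γ_k`. -/
def ARV {K : ℕ} (k : Fin K) (ω : Omega K) : ℤ :=
  (1 - alphaRV k ω) * betaRV k ω + alphaRV k ω * gammaRV (k : ℕ) ω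

/-- `B_k = (1-α_k)β_k - α_k γ_k`. -/
def BRV {K : ℕ} (k : Fin K) (ω : Omega K) : ℤ :=
  (1 - alphaRV k ω) * betaRV k ω - alphaRV k ω * gammaRV (k : ℕ) ω

-- basic facts
lemma sgn_inj (x y : Bool) : sgn x = sgn y ↔ x = y := by cases x <;> cases y <;> simp [sgn]

lemma sgn_neg (x : Bool) : sgn (!x) = -sgn x := by cases x <;> simp [sgn]

lemma fin3_mem (x : Fin 3) : x ∈ ({1, 2} : Finset (Fin 3)) ↔ ¬(x = 0) := by
  fin_cases x <;> decide

def zk {M : ℕ} (a : Fin M → Fin 3) (k : Fin M) : ℕ :=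
  (Finset.univ.filter fun j : Fin M => (j : ℕ) < (k : ℕ) ∧ a j = 0).card

lemma gammaRV_zero {M : ℕ} (ω : Omega M) : gammaRV 0 ω = epsRV ω := by
  simp [gammaRV]

lemma gammaRV_eq {M : ℕ} (k : Fin M) (ω : Omega M) :
    gammaRV (k : ℕ) ω = epsRV ω * (-1) ^ zk ω.2.1 k := by
  unfold gammaRV zk
  congr 1
  simp [alphaN, Finset.sum_boole, Finset.filter_filter]

lemma zk_zero_of_min {M : ℕ} (a : Fin M → Fin 3) (k0 : Fin M)
    (h : ∀ j, a j = 0 → k0 ≤ j) : zk a k0 = 0 := by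
  unfold zk
  rw [Finset.card_eq_zero, Finset.filter_eq_empty_iff]
  rintro j - ⟨hlt, hj⟩
  have := h j hj
  rw [Fin.le_def] at this
  omega

lemma even_case {M : ℕ} (a : Fin M → Fin 3)
    (h : ∀ k, a k = 0 → Even (zk a k)) :
    (∀ k, a k ≠ 0) ∨ ∃ k0, a k0 = 0 ∧ ∀ j, j ≠ k0 → a j ≠ 0 := by
  by_cases hall : ∀ k, a k ≠ 0
  · exact Or.inl hall
  push_neg at hall
  obtain ⟨k, hk⟩ := hall
  set Z : Finset (Fin M) := Finset.univ.filter (fun j => a j = 0) with hZ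
  have hkZ : k ∈ Z := by simp [hZ, hk]
  have hne : Z.Nonempty := ⟨k, hkZ⟩
  set k0 := Z.min' hne with hk0
  have hk0Z : k0 ∈ Z := Z.min'_mem hne
  have hk0a : a k0 = 0 := by simpa [hZ] using hk0Z
  refine Or.inr ⟨k0, hk0a, ?_⟩
  intro j hj
  intro hja
  have hjZ : j ∈ Z := by simp [hZ, hja]
  have hjE : j ∈ Z.erase k0 := Finset.mem_erase.2 ⟨hj, hjZ⟩
  have hne' : (Z.erase k0).Nonempty := ⟨j, hjE⟩
  set k1 := (Z.erase k0).min' hne' with hk1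
  have hk1E : k1 ∈ Z.erase k0 := Finset.min'_mem _ hne'
  have hk1Z : k1 ∈ Z := Finset.mem_of_mem_erase hk1E
  have hk1a : a k1 = 0 := by simpa [hZ] using hk1Z
  have hlt : k0 < k1 :=
    lt_of_le_of_ne (Z.min'_le _ hk1Z) (Ne.symm (Finset.ne_of_mem_erase hk1E))
  have hfil : (Finset.univ.filter fun m : Fin M => (m : ℕ) < (k1 : ℕ) ∧ a m = 0) = {k0} := by
    ext m
    simp only [Finset.mem_filter, Finset.mem_univ, true_and, Finset.mem_singleton]
    constructor
    · rintro ⟨hmlt, hma⟩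
      by_contra hm
      have hmE : m ∈ Z.erase k0 := Finset.mem_erase.2 ⟨hm, by simp [hZ, hma]⟩
      have h2 := Finset.min'_le _ _ hmE
      rw [← hk1, Fin.le_def] at h2
      omega
    · rintro rfl
      exact ⟨hlt, hk0a⟩
  have : Even (zk a k1) := h k1 hk1a
  rw [zk, hfil] at this
  simp at this

lemma odd_case {M : ℕ} (a : Fin M → Fin 3)
    (h : ∀ k, a k = 0 → Odd (zk a k)) : ∀ k, a k ≠ 0 := by
  by_contra hall
  push_neg at hall
  obtain ⟨k, hk⟩ := hall
  set Z : Finset (Fin M) := Finset.univ.filter (fun j => a j = 0) with hZ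
  have hne : Z.Nonempty := ⟨k, by simp [hZ, hk]⟩
  set k0 := Z.min' hne with hk0
  have hk0a : a k0 = 0 := by simpa [hZ] using Z.min'_mem hne
  have h0 : zk a k0 = 0 := by
    apply zk_zero_of_min
    intro j hj
    exact Z.min'_le _ (by simp [hZ, hj])
  have := h k0 hk0a
  rw [h0] at this
  simp at this

lemma ARV_iff {M : ℕ} (b e : Bool) (k : Fin M) (ω : Omega M) (he : ω.1 = e) :
    ARV k ω = sgn b ↔
      (ω.2.1 k = 0 ∧ sgn e * (-1) ^ zk ω.2.1 k = sgn b) ∨ (¬ω.2.1 k = 0 ∧ ω.2.2 k = b) := by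
  have heps : epsRV ω = sgn e := by rw [epsRV, he]
  by_cases h : ω.2.1 k = 0
  · simp [ARV, alphaRV, h, gammaRV_eq, heps]
  · simp [ARV, alphaRV, betaRV, h, sgn_inj]

lemma pow_even_iff (e : Bool) (n : ℕ) : sgn e * (-1) ^ n = sgn e ↔ Even n := by
  rcases Nat.even_or_odd n with hn | hn
  · simp [hn.neg_one_pow, hn]
  · rw [hn.neg_one_pow]
    constructor
    · intro h; cases e <;> simp [sgn] at h
    · intro h; exact absurd h (Nat.not_even_iff_odd.mpr hn)

lemma pow_odd_iff (e : Bool) (n : ℕ) : sgn (!e) * (-1) ^ n = sgn e ↔ Odd n := by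
  rw [sgn_neg]
  rcases Nat.even_or_odd n with hn | hn
  · rw [hn.neg_one_pow]
    constructor
    · intro h; cases e <;> simp [sgn] at h
    · intro h; exact absurd h (Nat.not_odd_iff_even.mpr hn)
  · simp [hn.neg_one_pow, hn]

def FB (M : ℕ) (e b : Bool) : Finset (Omega M) :=
  {e} ×ˢ (Fintype.piFinset fun _ : Fin M => ({1, 2} : Finset (Fin 3))) ×ˢ
    (Fintype.piFinset fun _ : Fin M => ({b} : Finset Bool))

def FK (M : ℕ) (b : Bool) (k : Fin M) : Finset (Omega M) :=
  {b} ×ˢ (Fintype.piFinset fun j : Fin M => if j = k then ({0} : Finset (Fin 3)) else {1, 2}) ×ˢ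
    (Fintype.piFinset fun j : Fin M => if j = k then (Finset.univ : Finset Bool) else {b})

lemma mem_FB {M : ℕ} (e b : Bool) (ω : Omega M) :
    ω ∈ FB M e b ↔ ω.1 = e ∧ (∀ j, ¬ω.2.1 j = 0) ∧ ∀ j, ω.2.2 j = b := by
  simp only [FB, Finset.mem_product, Fintype.mem_piFinset, Finset.mem_singleton, fin3_mem]

lemma mem_FK {M : ℕ} (b : Bool) (k : Fin M) (ω : Omega M) :
    ω ∈ FK M b k ↔
      ω.1 = b ∧ (ω.2.1 k = 0 ∧ ∀ j, j ≠ k → ¬ω.2.1 j = 0) ∧ ∀ j, j ≠ k → ω.2.2 j = b := by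
  simp only [FK, Finset.mem_product, Fintype.mem_piFinset, Finset.mem_singleton]
  constructor
  · rintro ⟨h1, h2, h3⟩
    refine ⟨h1, ⟨?_, ?_⟩, ?_⟩
    · have := h2 k; simpa using this
    · intro j hj; have := h2 j; rw [if_neg hj] at this; exact (fin3_mem _).1 this
    · intro j hj; have := h3 j; rw [if_neg hj] at this; exact Finset.mem_singleton.1 this
  · rintro ⟨h1, ⟨hk0, hk1⟩, h3⟩
    refine ⟨h1, ?_, ?_⟩
    · intro j
      by_cases hj : j = k
      · subst hj; simp [hk0]
      · rw [if_neg hj]; exact (fin3_mem _).2 (hk1 j hj)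
    · intro j
      by_cases hj : j = k
      · simp [hj]
      · rw [if_neg hj]; simp [h3 j hj]

lemma card_FB {M : ℕ} (e b : Bool) : (FB M e b).card = 2 ^ M := by
  simp [FB, Fintype.card_piFinset]

lemma card_FK {M : ℕ} (b : Bool) (k : Fin M) : (FK M b k).card = 2 ^ M := by
  have hM : 1 ≤ M := k.pos
  have h1 : (∏ j : Fin M, (if j = k then ({0} : Finset (Fin 3)) else {1, 2}).card)
      = 2 ^ (M - 1) := by
    rw [← Finset.mul_prod_erase Finset.univ _ (Finset.mem_univ k), if_pos rfl]
    rw [Finset.prod_congr rfl (fun j hj => by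
      rw [if_neg (Finset.ne_of_mem_erase hj)])]
    simp [Finset.prod_const, Finset.card_erase_of_mem]
  have h2 : (∏ j : Fin M, (if j = k then (Finset.univ : Finset Bool) else {b}).card) = 2 := by
    rw [← Finset.mul_prod_erase Finset.univ _ (Finset.mem_univ k), if_pos rfl]
    rw [Finset.prod_congr rfl (fun j hj => by
      rw [if_neg (Finset.ne_of_mem_erase hj)])]
    simp
  simp only [FK, Finset.card_product, Fintype.card_piFinset, h1, h2,
    Finset.card_singleton, one_mul]
  rw [← pow_succ]
  congr 1
  omega

lemma U_set (M : ℕ) (b : Bool) :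
    {ω : Omega M | gammaRV 0 ω = sgn b ∧ ∀ k : Fin M, ARV k ω = sgn b} =
      ↑(FB M b b ∪ Finset.univ.biUnion (FK M b)) := by
  ext ω
  rw [Set.mem_setOf_eq, Finset.mem_coe, Finset.mem_union]
  constructor
  · rintro ⟨hg, hA⟩
    have he : ω.1 = b := by
      rw [gammaRV_zero, epsRV] at hg; exact (sgn_inj _ _).1 hg
    have hA' : ∀ k, (ω.2.1 k = 0 ∧ Even (zk ω.2.1 k)) ∨ (¬ω.2.1 k = 0 ∧ ω.2.2 k = b) := by
      intro k
      rcases (ARV_iff b b k ω he).1 (hA k) with ⟨h0, h1⟩ | h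
      · exact Or.inl ⟨h0, (pow_even_iff b _).1 h1⟩
      · exact Or.inr h
    have hpar : ∀ k, ω.2.1 k = 0 → Even (zk ω.2.1 k) := by
      intro k hk
      rcases hA' k with ⟨_, h⟩ | ⟨h, _⟩
      · exact h
      · exact absurd hk h
    rcases even_case _ hpar with hall | ⟨k0, hk0, hother⟩
    · left
      rw [mem_FB]
      refine ⟨he, hall, fun j => ?_⟩
      rcases hA' j with ⟨h0, _⟩ | ⟨_, h⟩
      · exact absurd h0 (hall j)
      · exact h
    · right
      rw [Finset.mem_biUnion]
      refine ⟨k0, Finset.mem_univ _, (mem_FK b k0 ω).2 ⟨he, ⟨hk0, hother⟩, fun j hj => ?_⟩⟩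
      rcases hA' j with ⟨h0, _⟩ | ⟨_, h⟩
      · exact absurd h0 (hother j hj)
      · exact h
  · intro h
    have hnf : ω.1 = b ∧
        ∀ k, (ω.2.1 k = 0 ∧ Even (zk ω.2.1 k)) ∨ (¬ω.2.1 k = 0 ∧ ω.2.2 k = b) := by
      rcases h with hB | hK
      · rw [mem_FB] at hB
        exact ⟨hB.1, fun k => Or.inr ⟨hB.2.1 k, hB.2.2 k⟩⟩
      · rw [Finset.mem_biUnion] at hK
        obtain ⟨k0, -, hk⟩ := hK
        rw [mem_FK] at hk
        obtain ⟨he, ⟨hk0z, hoth⟩, hb⟩ := hk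
        refine ⟨he, fun k => ?_⟩
        by_cases hkk : k = k0
        · subst hkk
          refine Or.inl ⟨hk0z, ?_⟩
          have hz : zk ω.2.1 k = 0 := by
            apply zk_zero_of_min
            intro j hj
            by_contra hle
            have hjk : j ≠ k := by rintro rfl; exact hle le_rfl
            exact hoth j hjk hj
          rw [hz]
          exact Even.zero
        · exact Or.inr ⟨hoth k hkk, hb k hkk⟩
    obtain ⟨he, hk⟩ := hnf
    refine ⟨by rw [gammaRV_zero, epsRV, he], fun k => (ARV_iff b b k ω he).2 ?_⟩
    rcases hk k with ⟨h0, hev⟩ | hx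
    · exact Or.inl ⟨h0, (pow_even_iff b _).2 hev⟩
    · exact Or.inr hx

lemma V_set (M : ℕ) (b : Bool) :
    {ω : Omega M | gammaRV 0 ω = sgn (!b) ∧ ∀ k : Fin M, ARV k ω = sgn b} =
      ↑(FB M (!b) b) := by
  ext ω
  rw [Set.mem_setOf_eq, Finset.mem_coe, mem_FB]
  constructor
  · rintro ⟨hg, hA⟩
    have he : ω.1 = !b := by
      rw [gammaRV_zero, epsRV] at hg; exact (sgn_inj _ _).1 hg
    have hA' : ∀ k, (ω.2.1 k = 0 ∧ Odd (zk ω.2.1 k)) ∨ (¬ω.2.1 k = 0 ∧ ω.2.2 k = b) := by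
      intro k
      rcases (ARV_iff b (!b) k ω he).1 (hA k) with ⟨h0, h1⟩ | h
      · exact Or.inl ⟨h0, (pow_odd_iff b _).1 h1⟩
      · exact Or.inr h
    have hall : ∀ k, ω.2.1 k ≠ 0 := by
      apply odd_case
      intro k hk
      rcases hA' k with ⟨_, h⟩ | ⟨h, _⟩
      · exact h
      · exact absurd hk h
    refine ⟨he, hall, fun j => ?_⟩
    rcases hA' j with ⟨h0, _⟩ | ⟨_, h⟩
    · exact absurd h0 (hall j)
    · exact h
  · rintro ⟨he, hz, hb⟩
    refine ⟨by rw [gammaRV_zero, epsRV, he], fun k => (ARV_iff b (!b) k ω he).2 ?_⟩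
    exact Or.inr ⟨hz k, hb k⟩

lemma unif_coe {M : ℕ} (G : Finset (Omega M)) :
    unif M ↑G = (G.card : ENNReal) / ((2 * 3 ^ M) * 2 ^ M) := by
  rw [unif, PMF.toMeasure_uniformOfFintype_apply _ (Set.toFinite _).measurableSet]
  congr 1
  · simp [Fintype.card_coe]
  · simp only [Fintype.card_prod, Fintype.card_fun, Fintype.card_fin, Fintype.card_bool]
    push_cast
    ring

lemma two_pow_ne_zero (M : ℕ) : ((2 : ENNReal) ^ M) ≠ 0 := by positivity

lemma two_pow_ne_top (M : ℕ) : ((2 : ENNReal) ^ M) ≠ ⊤ :=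
  ENNReal.pow_ne_top (by norm_num)

lemma U_val (M : ℕ) (i : ℤ) (b : Bool) (hb : sgn b = i) :
    unif M {ω : Omega M | gammaRV 0 ω = i ∧ ∀ k : Fin M, ARV k ω = i} =
      (1 + (M : ENNReal)) / (2 * 3 ^ M) := by
  subst hb
  rw [U_set, unif_coe]
  have hdisj : Disjoint (FB M b b) (Finset.univ.biUnion (FK M b)) := by
    rw [Finset.disjoint_left]
    intro ω h1 h2
    rw [mem_FB] at h1
    rw [Finset.mem_biUnion] at h2
    obtain ⟨k, -, hk⟩ := h2
    rw [mem_FK] at hk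
    exact h1.2.1 k hk.2.1.1
  have hpair : ∀ k ∈ (Finset.univ : Finset (Fin M)), ∀ k' ∈ Finset.univ, k ≠ k' →
      Disjoint (FK M b k) (FK M b k') := by
    intro k _ k' _ hkk
    rw [Finset.disjoint_left]
    intro ω h1 h2
    rw [mem_FK] at h1 h2
    exact h2.2.1.2 k hkk h1.2.1.1
  have hcard : ((FB M b b ∪ Finset.univ.biUnion (FK M b)).card : ENNReal)
      = (1 + (M : ENNReal)) * 2 ^ M := by
    rw [Finset.card_union_of_disjoint hdisj, Finset.card_biUnion hpair]
    have : ∑ k : Fin M, (FK M b k).card = M * 2 ^ M := by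
      rw [Finset.sum_congr rfl (fun k _ => card_FK b k)]
      simp [Finset.sum_const, Finset.card_univ, mul_comm]
    rw [card_FB, this]
    push_cast
    ring
  rw [hcard]
  exact ENNReal.mul_div_mul_right _ _ (two_pow_ne_zero M) (two_pow_ne_top M)

lemma V_val (M : ℕ) (i : ℤ) (b : Bool) (hb : sgn b = i) :
    unif M {ω : Omega M | gammaRV 0 ω = -i ∧ ∀ k : Fin M, ARV k ω = i} =
      1 / (2 * 3 ^ M) := by
  subst hb
  have hs : ∀ ω : Omega M, (gammaRV 0 ω = -sgn b) = (gammaRV 0 ω = sgn (!b)) := by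
    intro ω; rw [sgn_neg]
  simp only [hs]
  rw [V_set, unif_coe, card_FB]
  push_cast
  calc ((2 : ENNReal) ^ M) / ((2 * 3 ^ M) * 2 ^ M)
      = (1 * 2 ^ M) / ((2 * 3 ^ M) * 2 ^ M) := by rw [one_mul]
    _ = 1 / (2 * 3 ^ M) :=
        ENNReal.mul_div_mul_right _ _ (two_pow_ne_zero M) (two_pow_ne_top M)

/-- Single block of length `M` (by symmetry `n = 1`, `S_0 = 0`, `S_1 = M`):
`u := P(γ_1 = i, A_j = i on the block) = (1+M)/(2·3^M)`,
`v := P(γ_1 = -i, A_j = i on the block) = 1/(2·3^M)`, hence `v/u = 1/(M+1)`. -/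
theorem stmt13 (M : ℕ) (i : ℤ) (hi : i = 1 ∨ i = -1) :
    unif M {ω | gammaRV 0 ω = i ∧ ∀ k : Fin M, ARV k ω = i} =
        (1 + (M : ENNReal)) / (2 * 3 ^ M) ∧
    unif M {ω | gammaRV 0 ω = -i ∧ ∀ k : Fin M, ARV k ω = i} = 1 / (2 * 3 ^ M) ∧
    unif M {ω | gammaRV 0 ω = -i ∧ ∀ k : Fin M, ARV k ω = i} /
        unif M {ω | gammaRV 0 ω = i ∧ ∀ k : Fin M, ARV k ω = i} =
      1 / ((M : ENNReal) + 1) := by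
  obtain ⟨b, hb⟩ : ∃ b, sgn b = i := by
    rcases hi with h | h
    · exact ⟨true, by simp [sgn, h]⟩
    · exact ⟨false, by simp [sgn, h]⟩
  have hu := U_val M i b hb
  have hv := V_val M i b hb
  refine ⟨hu, hv, ?_⟩
  rw [hu, hv]
  have hx0 : (2 * 3 ^ M : ENNReal) ≠ 0 :=
    mul_ne_zero (by norm_num) (pow_ne_zero _ (by norm_num))
  have hxt : (2 * 3 ^ M : ENNReal) ≠ ⊤ :=
    ENNReal.mul_ne_top (by norm_num) (ENNReal.pow_ne_top (by norm_num))
  have hne : ((2 * 3 ^ M : ENNReal))⁻¹ ≠ 0 := ENNReal.inv_ne_zero.2 hxt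
  have hnt : ((2 * 3 ^ M : ENNReal))⁻¹ ≠ ⊤ := ENNReal.inv_ne_top.2 hx0
  rw [div_eq_mul_inv (1 : ENNReal), div_eq_mul_inv (1 + (M : ENNReal)),
    ENNReal.mul_div_mul_right _ _ hne hnt, add_comm]
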